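/- arXiv:math/9406223 — 3 statements merged into one kernel-verified Lean document; each statement's English description precedes it below -/
import Mathlib

section
/- For 0 ≤ n, m ≤ N-1, the polynomials x ↦ Q_n(x-1,α+1,β,N-1) are orthogonal on {0,...,N} with respect to the measure x·ρ(x,α,β,N), with Σ_{x=0}^N Q_m(x-1,α+1,β,N-1) Q_n(x-1,α+1,β,N-1) x ρ(x,α,β,N) = (N(α+1)/(α+β+2)) · δ_{mn}/π_n(α+1,β,N-1). -/
/-!
Substituting `x = y + 1` kills the term `x = 0` and turns the measure `x ρ(x; α, β, N)` into
`N (α + 1) / (α + β + 2) · ρ(y; α + 1, β, N - 1)`, so the claim is the ordinary orthogonality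
relation of the Hahn polynomials with parameters `(α + 1, β, N - 1)`.

That relation comes from the difference equation: `Q_n` is an eigenfunction, with eigenvalue
`n (n + α + β + 1)`, of `B(x) Δ + D(x) ∇`, `B(x) = (x + α + 1)(x - N)`, `D(x) = x (x - β - N - 1)`,
and the Pearson equation `ρ(x + 1) D(x + 1) = ρ(x) B(x)` makes this operator symmetric for `ρ`.
Distinct eigenvalues give orthogonality. For the norm, summation by parts writes
`n (n + α + β + 1) ‖Q_n‖²` as `-∑ ρ B (Δ Q_n)²`; the forward shift
`Δ Q_n(x; α, β, N) ∝ Q_{n-1}(x; α + 1, β + 1, N - 1)` and `ρ B ∝ ρ(·; α + 1, β + 1, N - 1)`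
reduce it to the norm of `Q_{n-1}` with shifted parameters, and induction on `n` closes it.
-/

open Finset

noncomputable def poch (a : ℝ) (k : ℕ) : ℝ := ∏ i ∈ Finset.range k, (a + i)

noncomputable def hahnQ (n : ℕ) (x α β : ℝ) (N : ℕ) : ℝ :=
  ∑ k ∈ Finset.range (n + 1),
    poch (-(n : ℝ)) k * poch ((n : ℝ) + α + β + 1) k * poch (-x) k /
      ((Nat.factorial k : ℝ) * poch (α + 1) k * poch (-(N : ℝ)) k)

noncomputable def binomR (a b : ℝ) : ℝ :=
  Real.Gamma (a + 1) / (Real.Gamma (b + 1) * Real.Gamma (a - b + 1))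

noncomputable def hahnWeight (x : ℕ) (α β : ℝ) (N : ℕ) : ℝ :=
  binomR ((x : ℝ) + α) (x : ℝ) * binomR ((N : ℝ) - x + β) ((N : ℝ) - x) /
    binomR ((N : ℝ) + α + β + 1) (N : ℝ)

noncomputable def hahnPi (n : ℕ) (α β : ℝ) (N : ℕ) : ℝ :=
  ((-1 : ℝ) ^ n * poch (-(N : ℝ)) n * poch (α + 1) n * poch (α + β + 1) n) /
      ((Nat.factorial n : ℝ) * poch ((N : ℝ) + α + β + 2) n * poch (β + 1) n) *
    ((2 * (n : ℝ) + α + β + 1) / (α + β + 1))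

noncomputable def kraw (n : ℕ) (x p : ℝ) (N : ℕ) : ℝ :=
  ∑ k ∈ Finset.range (n + 1),
    poch (-(n : ℝ)) k * poch (-x) k / ((Nat.factorial k : ℝ) * poch (-(N : ℝ)) k) * (1 / p) ^ k

noncomputable def dualR (n : ℕ) (lam α β : ℝ) (N : ℕ) : ℝ :=
  ∑ k ∈ Finset.range (n + 1),
    poch (-(n : ℝ)) k * (∏ i ∈ Finset.range k, ((i : ℝ) * (α + β + 1 + i) - lam)) /
      ((Nat.factorial k : ℝ) * poch (α + 1) k * poch (-(N : ℝ)) k)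

noncomputable def ktil (l : ℕ) (x p : ℝ) (N : ℕ) : ℝ :=
  (N.choose l : ℝ) * (p / (1 - p)) ^ l * kraw l x p N

lemma poch_zero (a : ℝ) : poch a 0 = 1 := prod_range_zero _

lemma poch_succ (a : ℝ) (k : ℕ) : poch a (k + 1) = poch a k * (a + k) := prod_range_succ _ _

lemma poch_succ' (a : ℝ) (k : ℕ) : poch a (k + 1) = a * poch (a + 1) k := by
  simp only [poch, prod_range_succ', Nat.cast_add, Nat.cast_one, Nat.cast_zero, add_zero]
  rw [mul_comm]
  congr 1
  exact prod_congr rfl fun i _ => by ring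

lemma poch_mul_add (a : ℝ) (k : ℕ) : poch a k * (a + k) = a * poch (a + 1) k := by
  rw [← poch_succ, poch_succ']

lemma poch_eq_ascPochhammer_eval (a : ℝ) (k : ℕ) : poch a k = (ascPochhammer ℝ k).eval a := by
  induction k with
  | zero => simp [poch]
  | succ k ih => rw [poch_succ, ih, ascPochhammer_succ_eval]

lemma poch_pos {a : ℝ} (ha : 0 < a) (k : ℕ) : 0 < poch a k := by
  rw [poch_eq_ascPochhammer_eval]
  exact ascPochhammer_pos k a ha

lemma poch_neg_natCast_ne_zero {N k : ℕ} (hk : k ≤ N) : poch (-(N : ℝ)) k ≠ 0 :=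
  prod_ne_zero_iff.mpr fun i hi => by
    have : (i : ℝ) < N := by exact_mod_cast (mem_range.mp hi).trans_le hk
    linarith

lemma poch_eq_descPochhammer_smeval (a : ℝ) (k : ℕ) :
    poch a k = (-1) ^ k * (descPochhammer ℤ k).smeval (-a) := by
  rw [poch_eq_ascPochhammer_eval, ← neg_neg a, ascPochhammer_eval_neg_eq_descPochhammer, neg_neg,
    ← descPochhammer_map (algebraMap ℤ ℝ), Polynomial.eval_map_algebraMap,
    Polynomial.aeval_eq_smeval]

theorem poch_add (a b : ℝ) (n : ℕ) :
    poch (a + b) n = ∑ i ∈ range (n + 1), (n.choose i : ℝ) * poch a i * poch b (n - i) := by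
  rw [poch_eq_descPochhammer_smeval, neg_add, Ring.descPochhammer_smeval_add _ (Commute.all _ _),
    Nat.sum_antidiagonal_eq_sum_range_succ_mk, mul_sum]
  refine sum_congr rfl fun i hi => ?_
  obtain ⟨j, rfl⟩ := Nat.exists_eq_add_of_le (Nat.lt_succ_iff.mp (mem_range.mp hi))
  simp only [poch_eq_descPochhammer_smeval, Nat.add_sub_cancel_left, pow_add]
  ring

lemma Gamma_add_natCast_eq_poch_mul {a : ℝ} (ha : 0 < a) (k : ℕ) :
    Real.Gamma (a + k) = poch a k * Real.Gamma a := by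
  induction k with
  | zero => simp [poch_zero]
  | succ k ih =>
    rw [Nat.cast_succ, ← add_assoc, Real.Gamma_add_one (by positivity), ih, poch_succ]
    ring

lemma binomR_natCast_add_self {c : ℝ} (hc : -1 < c) (k : ℕ) :
    binomR (k + c) k = poch (c + 1) k / k.factorial := by
  have hc1 : 0 < c + 1 := by linarith
  rw [binomR, show (k : ℝ) + c + 1 = c + 1 + k by ring, show (k : ℝ) + c - k + 1 = c + 1 by ring,
    Gamma_add_natCast_eq_poch_mul hc1, Real.Gamma_nat_eq_factorial,
    mul_div_mul_right _ _ (Real.Gamma_pos_of_pos hc1).ne']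

/-- Unlike `hahnWeight`, whose Gamma quotients take junk values for `x > N`, this vanishes there;
the boundary terms of the summations by parts below rely on it. -/
noncomputable def hahnRho (x : ℕ) (α β : ℝ) (N : ℕ) : ℝ :=
  N.choose x * poch (α + 1) x * poch (β + 1) (N - x) / poch (α + β + 2) N

lemma hahnWeight_eq_hahnRho {x N : ℕ} (hx : x ≤ N) {α β : ℝ} (hα : -1 < α) (hβ : -1 < β) :
    hahnWeight x α β N = hahnRho x α β N := by
  have hN : ((N - x : ℕ) : ℝ) = N - x := Nat.cast_sub hx
  rw [hahnWeight, hahnRho, binomR_natCast_add_self hα, ← hN, binomR_natCast_add_self hβ,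
    show (N : ℝ) + α + β + 1 = N + (α + β + 1) by ring, binomR_natCast_add_self (by linarith),
    Nat.cast_choose ℝ hx, show α + β + 1 + 1 = α + β + 2 by ring]
  have := poch_pos (show 0 < α + β + 2 by linarith) N
  field_simp

lemma sum_hahnRho {α β : ℝ} (h : 0 < α + β + 2) (N : ℕ) :
    ∑ x ∈ range (N + 1), hahnRho x α β N = 1 := by
  simp only [hahnRho]
  rw [← sum_div, div_eq_one_iff_eq (poch_pos h N).ne', show α + β + 2 = α + 1 + (β + 1) by ring,
    poch_add]

lemma succ_mul_hahnRho_succ (y : ℕ) (α β : ℝ) (N : ℕ) :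
    (y + 1) * hahnRho (y + 1) α β (N + 1) =
      (N + 1) * (α + 1) / (α + β + 2) * hahnRho y (α + 1) β N := by
  have hchoose : ((y : ℝ) + 1) * (N + 1).choose (y + 1) = (N + 1) * N.choose y := by
    rw [mul_comm]
    exact_mod_cast (Nat.add_one_mul_choose_eq N y).symm
  rw [hahnRho, hahnRho, Nat.add_sub_add_right, poch_succ' (α + 1), poch_succ' (α + β + 2),
    show α + 1 + β + 2 = α + β + 2 + 1 by ring]
  simp only [div_eq_mul_inv, mul_inv]
  linear_combination (α + 1) * poch (α + 1 + 1) y * poch (β + 1) (N - y) * (α + β + 2)⁻¹ *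
    (poch (α + β + 2 + 1) N)⁻¹ * hchoose

noncomputable def hahnB (α : ℝ) (N : ℕ) (x : ℝ) : ℝ := (x + α + 1) * (x - N)

noncomputable def hahnD (β : ℝ) (N : ℕ) (x : ℝ) : ℝ := x * (x - β - N - 1)

lemma hahnRho_succ_mul_hahnD (x : ℕ) (α β : ℝ) (N : ℕ) :
    hahnRho (x + 1) α β N * hahnD β N (x + 1) = hahnRho x α β N * hahnB α N x := by
  rcases lt_or_ge x N with hx | hx
  · obtain ⟨k, rfl⟩ := Nat.exists_eq_add_of_lt hx
    have hchoose : ((x + k + 1).choose (x + 1) : ℝ) * (x + 1) = (x + k + 1).choose x * (k + 1) := by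
      exact_mod_cast Nat.choose_succ_right_eq (x + k + 1) x |>.trans (by congr 1; omega)
    rw [hahnRho, hahnRho, hahnB, hahnD, show x + k + 1 - x = k + 1 by omega,
      show x + k + 1 - (x + 1) = k by omega, poch_succ (β + 1) k, poch_succ (α + 1) x]
    push_cast
    linear_combination poch (α + 1) x * (α + 1 + x) * poch (β + 1) k * (- β - k - 1) /
      poch (α + β + 2) (x + k + 1) * hchoose
  · have hrho : hahnRho (x + 1) α β N = 0 := by
      simp [hahnRho, Nat.choose_eq_zero_of_lt (Nat.lt_succ_of_le hx)]
    rw [hrho, zero_mul]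
    rcases hx.eq_or_lt with rfl | hlt
    · simp [hahnB]
    · simp [hahnRho, Nat.choose_eq_zero_of_lt hlt]

lemma hahnRho_mul_hahnB {x N : ℕ} (hx : x ≤ N) {α β : ℝ} (hα : -1 < α) (hβ : -1 < β) :
    hahnRho x α β (N + 1) * hahnB α (N + 1) x =
      -((N + 1) * (α + 1) * (β + 1) * (N + α + β + 3) / ((α + β + 2) * (α + β + 3))) *
        hahnRho x (α + 1) (β + 1) N := by
  have hxN : (x : ℝ) ≤ N := by exact_mod_cast hx
  have hx0 : (0 : ℝ) ≤ x := x.cast_nonneg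
  have hchoose : ((N + 1).choose x : ℝ) = (N + 1) * N.choose x / (N + 1 - x) := by
    rw [eq_div_iff (by linarith)]
    have := congrArg (Nat.cast (R := ℝ)) (Nat.choose_mul_succ_eq N x)
    push_cast [Nat.cast_sub (Nat.le_succ_of_le hx)] at this
    linarith
  have hα' : poch (α + 1) x = (α + 1) * poch (α + 2) x / (x + α + 1) := by
    rw [eq_div_iff (by linarith), show α + 2 = α + 1 + 1 by ring, ← poch_mul_add]
    ring
  have hβ' : poch (β + 1) (N + 1 - x) = (β + 1) * poch (β + 2) (N - x) := by
    rw [Nat.sub_add_comm hx, poch_succ', show β + 1 + 1 = β + 2 by ring]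
  have hαβ' : poch (α + β + 2) (N + 1) =
      (α + β + 2) * (α + β + 3) * poch (α + β + 4) N / (N + α + β + 3) := by
    rw [eq_div_iff (by linarith), poch_succ', show α + β + 2 + 1 = α + β + 3 by ring,
      show α + β + 4 = α + β + 3 + 1 by ring]
    linear_combination (α + β + 2) * poch_mul_add (α + β + 3) N
  have := poch_pos (show 0 < α + β + 4 by linarith) N
  rw [hahnRho, hahnRho, hahnB, hβ', show α + 1 + (β + 1) + 2 = α + β + 4 by ring,
    show α + 1 + 1 = α + 2 by ring, show β + 1 + 1 = β + 2 by ring, hchoose, hα', hαβ']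
  have : (N : ℝ) + 1 - x ≠ 0 := by linarith
  have : (x : ℝ) + α + 1 ≠ 0 := by linarith
  have : α + β + 2 ≠ 0 := by linarith
  have : α + β + 3 ≠ 0 := by linarith
  have : (N : ℝ) + α + β + 3 ≠ 0 := by linarith
  field_simp
  push_cast
  ring

theorem sum_mul_symmetric_diffOp (p q : ℕ → ℝ) (f g : ℝ → ℝ) (N : ℕ) (hq : q 0 = 0) (hp : p N = 0)
    (hpq : ∀ x < N, q (x + 1) = p x) :
    ∑ x ∈ range (N + 1), g x * (p x * (f (x + 1) - f x) + q x * (f (x - 1) - f x)) =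
      -∑ x ∈ range N, p x * (f (x + 1) - f x) * (g (x + 1) - g x) := by
  have hforward : ∑ x ∈ range (N + 1), g x * (p x * (f (x + 1) - f x)) =
      ∑ x ∈ range N, g x * (p x * (f (x + 1) - f x)) := by
    simp [sum_range_succ, hp]
  have hbackward : ∑ x ∈ range (N + 1), g x * (q x * (f (x - 1) - f x)) =
      ∑ x ∈ range N, g (x + 1) * (p x * (f x - f (x + 1))) := by
    rw [sum_range_succ', hq]
    push_cast
    simp only [add_sub_cancel_right, zero_mul, mul_zero, add_zero]
    exact sum_congr rfl fun x hx => by rw [hpq x (mem_range.mp hx)]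
  simp only [mul_add, sum_add_distrib, hforward, hbackward, ← sum_neg_distrib]
  rw [← sum_add_distrib]
  exact sum_congr rfl fun x _ => by ring

noncomputable def hahnOp (α β : ℝ) (N : ℕ) (f : ℝ → ℝ) (x : ℝ) : ℝ :=
  hahnB α N x * (f (x + 1) - f x) + hahnD β N x * (f (x - 1) - f x)

theorem sum_hahnRho_mul_hahnOp (α β : ℝ) (N : ℕ) (f g : ℝ → ℝ) :
    ∑ x ∈ range (N + 1), hahnRho x α β N * g x * hahnOp α β N f x =
      -∑ x ∈ range N, hahnRho x α β N * hahnB α N x * (f (x + 1) - f x) * (g (x + 1) - g x) := by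
  have := sum_mul_symmetric_diffOp (fun x => hahnRho x α β N * hahnB α N x)
    (fun x => hahnRho x α β N * hahnD β N x) f g N (by simp [hahnD]) (by simp [hahnB])
    fun x _ => by exact_mod_cast hahnRho_succ_mul_hahnD x α β N
  rw [← this]
  exact sum_congr rfl fun x _ => by simp only [hahnOp]; ring

noncomputable def hahnCoeff (n : ℕ) (α β : ℝ) (N k : ℕ) : ℝ :=
  poch (-n) k * poch (n + α + β + 1) k / (k.factorial * poch (α + 1) k * poch (-N) k)

lemma hahnQ_eq_sum (n : ℕ) (x α β : ℝ) (N : ℕ) :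
    hahnQ n x α β N = ∑ k ∈ range (n + 1), hahnCoeff n α β N k * poch (-x) k :=
  sum_congr rfl fun _ _ => div_mul_eq_mul_div _ _ _ |>.symm

lemma hahnCoeff_succ_mul {n N k : ℕ} (hk : k < n) (hn : n ≤ N) {α : ℝ} (hα : -1 < α) (β : ℝ) :
    hahnCoeff n α β N (k + 1) * ((k + 1) * (N - k) * (α + 1 + k)) =
      hahnCoeff n α β N k * ((n - k) * (n + k + α + β + 1)) := by
  have hkN : (k : ℝ) < N := by exact_mod_cast hk.trans_le hn
  have : (0 : ℝ) ≤ k := k.cast_nonneg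
  have : α + 1 + k ≠ 0 := by linarith
  have : -(N : ℝ) + k ≠ 0 := by linarith
  have := poch_pos (show 0 < α + 1 by linarith) k
  have := poch_neg_natCast_ne_zero (hk.trans_le hn).le
  rw [hahnCoeff, hahnCoeff, poch_succ (-(n : ℝ)), poch_succ (n + α + β + 1), poch_succ (α + 1),
    poch_succ (-(N : ℝ)), Nat.factorial_succ]
  push_cast
  field_simp
  ring

lemma succ_mul_hahnCoeff_succ_succ {n N j : ℕ} (hj : j ≤ N) {α : ℝ} (hα : -1 < α) (β : ℝ) :
    (j + 1) * hahnCoeff (n + 1) α β (N + 1) (j + 1) =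
      (n + 1) * (n + α + β + 2) / ((α + 1) * (N + 1)) * hahnCoeff n (α + 1) (β + 1) N j := by
  have := poch_pos (show 0 < α + 1 + 1 by linarith) j
  have := poch_neg_natCast_ne_zero hj
  have : α + 1 ≠ 0 := by linarith
  rw [hahnCoeff, hahnCoeff, poch_succ', poch_succ', poch_succ' (α + 1), poch_succ',
    Nat.factorial_succ]
  push_cast
  rw [show -((n : ℝ) + 1) + 1 = -n by ring, show -((N : ℝ) + 1) + 1 = -N by ring,
    show (n : ℝ) + 1 + α + β + 1 + 1 = n + (α + 1) + (β + 1) + 1 by ring]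
  field_simp
  ring

lemma hahnOp_sum {ι : Type*} (s : Finset ι) (c : ι → ℝ) (φ : ι → ℝ → ℝ) (α β : ℝ) (N : ℕ)
    (x : ℝ) : hahnOp α β N (fun y => ∑ i ∈ s, c i * φ i y) x =
      ∑ i ∈ s, c i * hahnOp α β N (φ i) x := by
  simp only [hahnOp, ← sum_sub_distrib, mul_sum, ← sum_add_distrib]
  exact sum_congr rfl fun _ _ => by ring

lemma hahnOp_poch_neg_succ (α β : ℝ) (N k : ℕ) (x : ℝ) :
    hahnOp α β N (fun y => poch (-y) (k + 1)) x =
      (k + 1) * ((k + α + β + 2) * poch (-x) (k + 1) + (N - k) * (k + α + 1) * poch (-x) k) := by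
  have hforward : poch (-(x + 1)) (k + 1) = -(x + 1) * poch (-x) k := by
    rw [poch_succ', show -(x + 1) + 1 = -x by ring]
  have hbackward : poch (-(x - 1)) (k + 1) = poch (-x + 1) k * (-x + 1 + k) := by
    rw [poch_succ, show -(x - 1) = -x + 1 by ring]
  have hshift := poch_mul_add (-x) k
  simp only [hahnOp, hahnB, hahnD, hforward, hbackward, poch_succ (-x) k]
  linear_combination (x - β - N - 1) * (-x + 1 + k) * hshift

theorem hahnOp_hahnQ {n N : ℕ} (hn : n ≤ N) {α : ℝ} (hα : -1 < α) (β x : ℝ) :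
    hahnOp α β N (fun y => hahnQ n y α β N) x = n * (n + α + β + 1) * hahnQ n x α β N := by
  let c := hahnCoeff n α β N
  have hterm : ∀ k ∈ range n, c (k + 1) * hahnOp α β N (fun y => poch (-y) (k + 1)) x =
      c (k + 1) * ((k + 1 : ℕ) * ((k + 1 : ℕ) + α + β + 1)) * poch (-x) (k + 1) +
        c k * ((n - k) * (n + k + α + β + 1)) * poch (-x) k := by
    intro k hk
    rw [hahnOp_poch_neg_succ, ← hahnCoeff_succ_mul (mem_range.mp hk) hn hα]
    push_cast
    ring
  have hraise : ∑ k ∈ range n,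
      c (k + 1) * ((k + 1 : ℕ) * ((k + 1 : ℕ) + α + β + 1)) * poch (-x) (k + 1) =
      ∑ k ∈ range (n + 1), c k * (k * (k + α + β + 1)) * poch (-x) k := by
    simp [sum_range_succ' _ n]
  have hextend : ∑ k ∈ range n, c k * ((n - k) * (n + k + α + β + 1)) * poch (-x) k =
      ∑ k ∈ range (n + 1), c k * ((n - k) * (n + k + α + β + 1)) * poch (-x) k := by
    simp [sum_range_succ _ n]
  have hconst : hahnOp α β N (fun y => poch (-y) 0) x = 0 := by simp [hahnOp, poch_zero]
  simp only [hahnQ_eq_sum, hahnOp_sum]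
  rw [sum_range_succ', sum_congr rfl hterm, sum_add_distrib, hraise, hextend, hconst, mul_zero,
    add_zero, ← sum_add_distrib, mul_sum]
  -- `k (k + s) + (n - k) (n + k + s) = n (n + s)` with `s = α + β + 1`
  exact sum_congr rfl fun k _ => by ring

lemma poch_neg_add_one_sub (x : ℝ) (k : ℕ) :
    poch (-(x + 1)) (k + 1) - poch (-x) (k + 1) = -(k + 1) * poch (-x) k := by
  rw [poch_succ', poch_succ, show -(x + 1) + 1 = -x by ring]
  ring

theorem hahnQ_succ_add_one_sub {n N : ℕ} (hn : n ≤ N) {α : ℝ} (hα : -1 < α) (β x : ℝ) :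
    hahnQ (n + 1) (x + 1) α β (N + 1) - hahnQ (n + 1) x α β (N + 1) =
      -((n + 1) * (n + α + β + 2) / ((α + 1) * (N + 1))) * hahnQ n x (α + 1) (β + 1) N := by
  simp only [hahnQ_eq_sum, ← sum_sub_distrib, ← mul_sub]
  rw [sum_range_succ', mul_sum]
  simp only [poch_zero, sub_self, mul_zero, add_zero, poch_neg_add_one_sub]
  refine sum_congr rfl fun j hj => ?_
  have hjN : j ≤ N := (Nat.lt_succ_iff.mp (mem_range.mp hj)).trans hn
  linear_combination (-poch (-x) j) * succ_mul_hahnCoeff_succ_succ (n := n) hjN hα β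

theorem eigenvalue_mul_sum_hahnRho_mul_hahnQ {n N : ℕ} (hn : n ≤ N) {α : ℝ} (hα : -1 < α)
    (β : ℝ) (m : ℕ) :
    n * (n + α + β + 1) * ∑ x ∈ range (N + 1), hahnRho x α β N * hahnQ m x α β N * hahnQ n x α β N =
      -∑ x ∈ range N, hahnRho x α β N * hahnB α N x *
        (hahnQ n (x + 1) α β N - hahnQ n x α β N) * (hahnQ m (x + 1) α β N - hahnQ m x α β N) := by
  rw [mul_sum, ← sum_hahnRho_mul_hahnOp α β N (fun y => hahnQ n y α β N)
    (fun y => hahnQ m y α β N)]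
  exact sum_congr rfl fun x _ => by rw [hahnOp_hahnQ hn hα]; ring

theorem sum_hahnRho_mul_hahnQ_mul_hahnQ_of_ne {n m N : ℕ} (hn : n ≤ N) (hm : m ≤ N) (hne : m ≠ n)
    {α β : ℝ} (hα : -1 < α) (hβ : -1 < β) :
    ∑ x ∈ range (N + 1), hahnRho x α β N * hahnQ m x α β N * hahnQ n x α β N = 0 := by
  have hn' := eigenvalue_mul_sum_hahnRho_mul_hahnQ hn hα β m
  have hm' := eigenvalue_mul_sum_hahnRho_mul_hahnQ hm hα β n
  rw [sum_congr rfl fun x _ => mul_right_comm (hahnRho x α β N) _ _] at hm'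
  rw [sum_congr rfl fun x _ => mul_right_comm (hahnRho x α β N * hahnB α N x) _ _] at hm'
  have hdiff : ((n : ℝ) - m) * (n + m + α + β + 1) ≠ 0 := by
    have hnm : (n : ℝ) ≠ m := by exact_mod_cast hne.symm
    have : (1 : ℝ) ≤ n + m := by exact_mod_cast Nat.one_le_iff_ne_zero.mpr (by omega)
    exact mul_ne_zero (sub_ne_zero.mpr hnm) (by linarith)
  refine (mul_eq_zero.mp ?_).resolve_left hdiff
  linear_combination hn' - hm'

theorem sum_hahnRho_mul_hahnQ_sq_succ {n N : ℕ} (hn : n ≤ N) {α β : ℝ} (hα : -1 < α)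
    (hβ : -1 < β) :
    ∑ x ∈ range (N + 1 + 1), hahnRho x α β (N + 1) * hahnQ (n + 1) x α β (N + 1) ^ 2 =
      (β + 1) * (N + α + β + 3) * (n + 1) * (n + α + β + 2) /
          ((α + 1) * (α + β + 2) * (α + β + 3) * (N + 1)) *
        ∑ x ∈ range (N + 1), hahnRho x (α + 1) (β + 1) N * hahnQ n x (α + 1) (β + 1) N ^ 2 := by
  have hlam : (0 : ℝ) < (n + 1) * (n + α + β + 2) := by
    have : (0 : ℝ) ≤ n := n.cast_nonneg
    have : 0 < (n : ℝ) + 1 := by linarith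
    have : 0 < (n : ℝ) + α + β + 2 := by linarith
    positivity
  have hparts := eigenvalue_mul_sum_hahnRho_mul_hahnQ (Nat.add_le_add_right hn 1) hα β (n + 1)
  have hterm : ∀ x ∈ range (N + 1), hahnRho x α β (N + 1) * hahnB α (N + 1) x *
      (hahnQ (n + 1) (x + 1) α β (N + 1) - hahnQ (n + 1) x α β (N + 1)) *
        (hahnQ (n + 1) (x + 1) α β (N + 1) - hahnQ (n + 1) x α β (N + 1)) =
      -((N + 1) * (α + 1) * (β + 1) * (N + α + β + 3) / ((α + β + 2) * (α + β + 3)) *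
        ((n + 1) * (n + α + β + 2) / ((α + 1) * (N + 1))) ^ 2) *
        (hahnRho x (α + 1) (β + 1) N * hahnQ n x (α + 1) (β + 1) N ^ 2) := by
    intro x hx
    rw [hahnRho_mul_hahnB (Nat.lt_succ_iff.mp (mem_range.mp hx)) hα hβ,
      hahnQ_succ_add_one_sub hn hα]
    ring
  rw [sum_congr rfl hterm, ← mul_sum, neg_mul, neg_neg] at hparts
  push_cast at hparts
  have : α + 1 ≠ 0 := by linarith
  have : α + β + 2 ≠ 0 := by linarith
  have : α + β + 3 ≠ 0 := by linarith
  have : (N : ℝ) + 1 ≠ 0 := by positivity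
  simp only [sq]
  refine mul_left_cancel₀ hlam.ne' ?_
  linear_combination (norm := skip) hparts
  field_simp
  ring

lemma hahnPi_zero {α β : ℝ} (hαβ : α + β + 1 ≠ 0) (N : ℕ) : hahnPi 0 α β N = 1 := by
  simp [hahnPi, poch_zero, hαβ]

lemma hahnPi_add_one_add_one {α β : ℝ} (hα : -1 < α) (hβ : -1 < β) (hαβ : α + β + 1 ≠ 0)
    (n N : ℕ) :
    hahnPi n (α + 1) (β + 1) N =
      (β + 1) * (N + α + β + 3) * (n + 1) * (n + α + β + 2) /
          ((α + 1) * (α + β + 2) * (α + β + 3) * (N + 1)) * hahnPi (n + 1) α β (N + 1) := by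
  have hn : (0 : ℝ) ≤ n := n.cast_nonneg
  have hN : (0 : ℝ) ≤ N := N.cast_nonneg
  have hmid : poch (α + β + 2) n = (α + β + 2) * poch (α + β + 3) n / (α + β + 2 + n) := by
    rw [eq_div_iff (by linarith), poch_mul_add, show α + β + 2 + 1 = α + β + 3 by ring]
  have := poch_pos (show 0 < N + α + β + 4 by linarith) n
  have := poch_pos (show 0 < β + 2 by linarith) n
  have : α + 1 ≠ 0 := by linarith
  have : β + 1 ≠ 0 := by linarith
  have : α + β + 2 ≠ 0 := by linarith
  have : α + β + 3 ≠ 0 := by linarith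
  have : α + β + 2 + n ≠ 0 := by linarith
  have : (N : ℝ) + α + β + 3 ≠ 0 := by linarith
  have : 2 * (n : ℝ) + α + β + 3 ≠ 0 := by linarith
  simp only [hahnPi, poch_succ', Nat.factorial_succ, pow_succ]
  push_cast
  rw [show -((N : ℝ) + 1) + 1 = -N by ring, show α + 1 + 1 = α + 2 by ring,
    show α + β + 1 + 1 = α + β + 2 by ring, show (N : ℝ) + 1 + α + β + 2 = N + α + β + 3 by ring,
    show (N : ℝ) + α + β + 3 + 1 = N + α + β + 4 by ring, show β + 1 + 1 = β + 2 by ring,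
    show α + 1 + (β + 1) + 1 = α + β + 3 by ring,
    show (N : ℝ) + (α + 1) + (β + 1) + 2 = N + α + β + 4 by ring, hmid]
  field_simp
  ring

theorem sum_hahnRho_mul_hahnQ_sq {n N : ℕ} (hn : n ≤ N) {α β : ℝ} (hα : -1 < α) (hβ : -1 < β)
    (hαβ : α + β + 1 ≠ 0) :
    ∑ x ∈ range (N + 1), hahnRho x α β N * hahnQ n x α β N ^ 2 = 1 / hahnPi n α β N := by
  induction n generalizing N α β with
  | zero =>
    simp [hahnQ, poch_zero, sum_hahnRho (show 0 < α + β + 2 by linarith), hahnPi_zero hαβ]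
  | succ n ih =>
    obtain ⟨N, rfl⟩ := Nat.exists_eq_add_of_le' (Nat.one_le_of_lt hn)
    have hr : (β + 1) * (N + α + β + 3) * (n + 1) * (n + α + β + 2) /
        ((α + 1) * (α + β + 2) * (α + β + 3) * (N + 1)) ≠ 0 := by
      have : (0 : ℝ) ≤ n := n.cast_nonneg
      have : (0 : ℝ) ≤ N := N.cast_nonneg
      have : 0 < β + 1 := by linarith
      have : 0 < (N : ℝ) + α + β + 3 := by linarith
      have : 0 < (n : ℝ) + 1 := by linarith
      have : 0 < (n : ℝ) + α + β + 2 := by linarith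
      have : 0 < α + 1 := by linarith
      have : 0 < α + β + 2 := by linarith
      have : 0 < α + β + 3 := by linarith
      positivity
    rw [sum_hahnRho_mul_hahnQ_sq_succ (by omega) hα hβ,
      ih (by omega) (by linarith) (by linarith) (by linarith), hahnPi_add_one_add_one hα hβ hαβ,
      one_div, one_div, mul_inv, ← mul_assoc, mul_inv_cancel₀ hr, one_mul]

theorem sum_hahnRho_mul_hahnQ_mul_hahnQ {n m N : ℕ} (hn : n ≤ N) (hm : m ≤ N) {α β : ℝ}
    (hα : -1 < α) (hβ : -1 < β) (hαβ : α + β + 1 ≠ 0) :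
    ∑ x ∈ range (N + 1), hahnRho x α β N * hahnQ m x α β N * hahnQ n x α β N =
      (if m = n then 1 else 0) / hahnPi n α β N := by
  split_ifs with hmn
  · subst hmn
    simp only [mul_assoc, ← sq, sum_hahnRho_mul_hahnQ_sq hn hα hβ hαβ]
  · rw [zero_div, sum_hahnRho_mul_hahnQ_mul_hahnQ_of_ne hn hm hmn hα hβ]

theorem shifted_hahn_orthogonality_x (N : ℕ) (hN : 1 ≤ N) (α β : ℝ)
    (hα : -1 < α) (hβ : -1 < β) (n m : ℕ) (hn : n ≤ N - 1) (hm : m ≤ N - 1) :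
    ∑ x ∈ Finset.range (N + 1),
        hahnQ m ((x : ℝ) - 1) (α + 1) β (N - 1) *
            hahnQ n ((x : ℝ) - 1) (α + 1) β (N - 1) *
            (x : ℝ) * hahnWeight x α β N =
      (N : ℝ) * (α + 1) / (α + β + 2) *
        ((if m = n then (1 : ℝ) else 0) / hahnPi n (α + 1) β (N - 1)) := by
  obtain ⟨N, rfl⟩ := Nat.exists_eq_add_of_le' hN
  rw [Nat.add_sub_cancel] at hn hm ⊢
  have hterm : ∀ y ∈ range (N + 1),
      hahnQ m ((y + 1 : ℕ) - 1) (α + 1) β N * hahnQ n ((y + 1 : ℕ) - 1) (α + 1) β N *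
          (y + 1 : ℕ) * hahnWeight (y + 1) α β (N + 1) =
        (N + 1) * (α + 1) / (α + β + 2) *
          (hahnRho y (α + 1) β N * hahnQ m y (α + 1) β N * hahnQ n y (α + 1) β N) := by
    intro y hy
    rw [hahnWeight_eq_hahnRho (by simpa using hy) hα hβ]
    push_cast
    rw [add_sub_cancel_right]
    linear_combination hahnQ m y (α + 1) β N * hahnQ n y (α + 1) β N *
      succ_mul_hahnRho_succ y α β N
  rw [sum_range_succ', sum_congr rfl hterm, ← mul_sum,
    sum_hahnRho_mul_hahnQ_mul_hahnQ hn hm (by linarith) hβ (by linarith)]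
  push_cast
  ring
end

section
/- For n ≥ 2, the Hahn polynomial with α = β = -1/2 and N = n² satisfies Q_n(2, -1/2, -1/2, n²) = -5/3. -/
open Finset

/-! At `x = 2` the factor `(-2)_k` kills every term with `k ≥ 3`, so `Q_n` has three terms; for
`α = β = -1/2` and `N = n²` they are `1`, `-4` and `4/3`. -/

theorem poch_neg_natCast_eq_zero {m k : ℕ} (h : m < k) : poch (-(m : ℝ)) k = 0 :=
  Finset.prod_eq_zero (Finset.mem_range.2 h) (by simp)

theorem hahnQ_two (n : ℕ) (hn : 2 ≤ n) (α β : ℝ) (N : ℕ) :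
    hahnQ n 2 α β N =
      1 - 2 * n * (n + α + β + 1) / ((α + 1) * N) +
        n * (n - 1) * (n + α + β + 1) * (n + α + β + 2) / ((α + 1) * (α + 2) * (N * (N - 1))) := by
  have hsplit : Finset.range 3 ⊆ Finset.range (n + 1) := Finset.range_subset_range.2 (by omega)
  rw [hahnQ, ← Finset.sum_subset hsplit fun k _ hk => ?vanish]
  case vanish =>
    have hpoch : poch (-((2 : ℕ) : ℝ)) k = 0 := poch_neg_natCast_eq_zero (by rw [Finset.mem_range] at hk; omega)
    simp only [Nat.cast_ofNat] at hpoch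
    simp [hpoch]
  simp only [Finset.sum_range_succ, Finset.sum_range_zero, poch, Finset.prod_range_succ,
    Finset.prod_range_zero, Nat.factorial]
  push_cast
  -- splitting the inverses into atoms lets `ring` cancel `2!` without nonvanishing hypotheses
  simp only [div_eq_mul_inv, mul_inv]
  have hflip : (-(N : ℝ) + 1)⁻¹ = -((N : ℝ) - 1)⁻¹ := by rw [neg_inv]; congr 1; ring
  rw [hflip]
  ring

theorem hahn_zaremba_example (n : ℕ) (hn : 2 ≤ n) :
    hahnQ n 2 (-(1 / 2)) (-(1 / 2)) (n ^ 2) = -(5 / 3) := by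
  have hn0 : (n : ℝ) ≠ 0 := Nat.cast_ne_zero.2 (by omega)
  have hn1 : (n : ℝ) ^ 2 - 1 ≠ 0 := by
    have h2 : (2 : ℝ) ≤ n := by exact_mod_cast hn
    nlinarith
  rw [hahnQ_two n hn]
  push_cast
  field_simp
  ring
end

section
/- The Krawtchouk polynomials k_n(x,p,N) = Σ_{k=0}^n ((-n)_k(-x)_k)/(k!(-N)_k) (1/p)^k are orthogonal with respect to the binomial weights: for 0 ≤ m, n ≤ N, Σ_{x=0}^N C(N,x) p^x (1-p)^{N-x} k_m(x,p,N) k_n(x,p,N) = δ_{mn} (q/p)^n / C(N,n), where q = 1-p. -/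
open Finset

/-! With `q = 1 - p`, the numbers `C(N,n) k_n(x)` are the coefficients of the generating polynomial
`G_x(t) = (1 + t - t/p)^x (1 + t)^(N-x)`. The binomial theorem gives
`Σ_x C(N,x) p^x q^(N-x) G_x(s) G_x(t) = (p (1 + s - s/p) (1 + t - t/p) + q (1 + s) (1 + t))^N
  = (1 + (q/p) s t)^N`,
and comparing the coefficients of `s^m t^n` on both sides is the orthogonality relation. -/

open Polynomial

lemma coeff_one_add_C_mul_X_pow {R : Type*} [CommSemiring R] (b : R) (N n : ℕ) :
    ((1 + C b * X) ^ N).coeff n = N.choose n * b ^ n := by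
  have hcomp : (1 + C b * X) ^ N = ((1 + X) ^ N).comp (C b * X) := by
    simp only [pow_comp, add_comp, one_comp, X_comp]
  rw [hcomp, comp_C_mul_X_coeff, coeff_one_add_X_pow]

lemma poch_neg_natCast (x k : ℕ) : poch (-x) k = (-1) ^ k * k.factorial * x.choose k := by
  have hneg : poch (-x) k = ∏ i ∈ range k, -((x : ℝ) - i) :=
    Finset.prod_congr rfl fun i _ ↦ by ring
  rw [hneg, Finset.prod_neg, card_range, ← descPochhammer_eval_eq_prod_range,
    descPochhammer_eval_eq_descFactorial, Nat.descFactorial_eq_factorial_mul_choose]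
  push_cast
  ring

lemma choose_mul_kraw {p : ℝ} {n N : ℕ} (hn : n ≤ N) (x : ℕ) :
    N.choose n * kraw n x p N =
      ∑ k ∈ range (n + 1), x.choose k * (-p⁻¹) ^ k * (N - k).choose (n - k) := by
  rw [kraw, Finset.mul_sum]
  refine Finset.sum_congr rfl fun k hk ↦ ?_
  have hkn : k ≤ n := Finset.mem_range_succ_iff.mp hk
  have hNk : (N.choose k : ℝ) ≠ 0 := by exact_mod_cast (Nat.choose_pos (hkn.trans hn)).ne'
  have hchoose : (N.choose n * n.choose k : ℝ) = N.choose k * (N - k).choose (n - k) := by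
    exact_mod_cast Nat.choose_mul hkn
  simp only [poch_neg_natCast]
  field_simp
  rw [neg_pow]
  linear_combination (-1) ^ k * (x.choose k : ℝ) * (1 / p) ^ k * hchoose

section

variable {K : Type*} [Field K]

noncomputable def krawtchoukGen (p : K) (N x : ℕ) : K[X] :=
  (C (-p⁻¹) * X + (1 + X)) ^ x * (1 + X) ^ (N - x)

lemma coeff_krawtchoukGen (p : K) {N x : ℕ} (hx : x ≤ N) (n : ℕ) :
    (krawtchoukGen p N x).coeff n =
      ∑ k ∈ range (n + 1), x.choose k * (-p⁻¹) ^ k * (N - k).choose (n - k) := by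
  set f : ℕ → K := fun k ↦ x.choose k * (-p⁻¹) ^ k * (N - k).choose (n - k)
  have hterm : ∀ k ∈ range (x + 1),
      ((C (-p⁻¹) * X) ^ k * (1 + X) ^ (x - k) * (x.choose k : K[X]) * (1 + X) ^ (N - x)).coeff
        n = if k ≤ n then f k else 0 := by
    intro k hk
    have hkx : k ≤ x := Finset.mem_range_succ_iff.mp hk
    have hsplit :
        (C (-p⁻¹) * X) ^ k * (1 + X) ^ (x - k) * (x.choose k : K[X]) * (1 + X) ^ (N - x) =
          C (x.choose k * (-p⁻¹) ^ k) * ((1 + X) ^ (N - k) * X ^ k) := by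
      rw [show N - k = (x - k) + (N - x) by omega, pow_add, mul_pow, map_mul, map_natCast, C_pow]
      ring
    rw [hsplit, coeff_C_mul, coeff_mul_X_pow', coeff_one_add_X_pow]
    split_ifs <;> simp [f, mul_assoc]
  rw [krawtchoukGen, add_pow, Finset.sum_mul, finsetSum_coeff, Finset.sum_congr rfl hterm,
    ← Finset.sum_filter]
  calc ∑ k ∈ range (x + 1) with k ≤ n, f k = ∑ k ∈ range (n + 1) with k ≤ x, f k := by
        congr 1; ext k; simp only [Finset.mem_filter, Finset.mem_range]; omega
    _ = ∑ k ∈ range (n + 1), f k := by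
        refine Finset.sum_filter_of_ne fun k _ hfk ↦ ?_
        by_contra! hxk
        simp [f, Nat.choose_eq_zero_of_lt hxk] at hfk

lemma sum_binomial_mul_eval_mul_eval_krawtchoukGen {p : K} (hp : p ≠ 0) (N : ℕ) (s t : K) :
    ∑ x ∈ range (N + 1), N.choose x * p ^ x * (1 - p) ^ (N - x) *
        (krawtchoukGen p N x).eval s * (krawtchoukGen p N x).eval t =
      (1 + (1 - p) / p * s * t) ^ N := by
  have hsum : p * (-p⁻¹ * s + (1 + s)) * (-p⁻¹ * t + (1 + t)) + (1 - p) * (1 + s) * (1 + t) =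
      1 + (1 - p) / p * s * t := by
    field_simp; ring
  rw [← hsum, add_pow]
  refine Finset.sum_congr rfl fun x _ ↦ ?_
  simp only [krawtchoukGen, eval_mul, eval_pow, eval_add, eval_C, eval_X, eval_one, mul_pow]
  ring

lemma sum_binomial_mul_eval_smul_krawtchoukGen [Infinite K] {p : K} (hp : p ≠ 0) (N : ℕ)
    (s : K) :
    ∑ x ∈ range (N + 1),
        (N.choose x * p ^ x * (1 - p) ^ (N - x) * (krawtchoukGen p N x).eval s) •
          krawtchoukGen p N x =
      (1 + C ((1 - p) / p * s) * X) ^ N := by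
  refine Polynomial.funext fun t ↦ ?_
  simp only [eval_finsetSum, eval_smul, smul_eq_mul, eval_pow, eval_add, eval_one, eval_mul,
    eval_C, eval_X]
  exact sum_binomial_mul_eval_mul_eval_krawtchoukGen hp N s t

lemma sum_binomial_mul_coeff_mul_coeff_krawtchoukGen [Infinite K] {p : K} (hp : p ≠ 0)
    (N m n : ℕ) :
    ∑ x ∈ range (N + 1), N.choose x * p ^ x * (1 - p) ^ (N - x) *
        (krawtchoukGen p N x).coeff m * (krawtchoukGen p N x).coeff n =
      if m = n then N.choose n * ((1 - p) / p) ^ n else 0 := by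
  have hpoly : ∑ x ∈ range (N + 1),
      (N.choose x * p ^ x * (1 - p) ^ (N - x) * (krawtchoukGen p N x).coeff n) •
        krawtchoukGen p N x = C (N.choose n * ((1 - p) / p) ^ n) * X ^ n := by
    refine Polynomial.funext fun s ↦ ?_
    have hcoeff := congrArg (coeff · n) (sum_binomial_mul_eval_smul_krawtchoukGen hp N s)
    simp only [finsetSum_coeff, coeff_smul, smul_eq_mul, coeff_one_add_C_mul_X_pow] at hcoeff
    simp only [eval_finsetSum, eval_smul, smul_eq_mul, eval_mul, eval_C, eval_pow, eval_X]
    rw [mul_pow, ← mul_assoc] at hcoeff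
    rw [← hcoeff]
    exact Finset.sum_congr rfl fun x _ ↦ mul_right_comm _ _ _
  have hcoeff := congrArg (coeff · m) hpoly
  simp only [finsetSum_coeff, coeff_smul, smul_eq_mul, coeff_C_mul, coeff_X_pow, mul_ite, mul_one,
    mul_zero] at hcoeff
  rw [← hcoeff]
  exact Finset.sum_congr rfl fun x _ ↦ mul_right_comm _ _ _

end

lemma coeff_krawtchoukGen_eq_choose_mul_kraw (p : ℝ) {N x n : ℕ} (hx : x ≤ N) (hn : n ≤ N) :
    (krawtchoukGen p N x).coeff n = N.choose n * kraw n x p N := by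
  rw [coeff_krawtchoukGen p hx, choose_mul_kraw hn]

theorem krawtchouk_orthogonality_general (N : ℕ) (p : ℝ)
    (hp : p ∈ Set.Ioo (0 : ℝ) 1) (n m : ℕ) (hn : n ≤ N) (hm : m ≤ N) :
    ∑ x ∈ Finset.range (N + 1),
        (N.choose x : ℝ) * p ^ x * (1 - p) ^ (N - x) *
          kraw m (x : ℝ) p N * kraw n (x : ℝ) p N =
      (if m = n then (1 : ℝ) else 0) * ((1 - p) / p) ^ n / (N.choose n : ℝ) := by
  have hNm : (N.choose m : ℝ) ≠ 0 := by exact_mod_cast (Nat.choose_pos hm).ne'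
  have hNn : (N.choose n : ℝ) ≠ 0 := by exact_mod_cast (Nat.choose_pos hn).ne'
  have hcoeff := sum_binomial_mul_coeff_mul_coeff_krawtchoukGen hp.1.ne' N m n
  have hsum : (N.choose m : ℝ) * N.choose n * ∑ x ∈ range (N + 1),
      (N.choose x : ℝ) * p ^ x * (1 - p) ^ (N - x) * kraw m x p N * kraw n x p N =
        if m = n then (N.choose n : ℝ) * ((1 - p) / p) ^ n else 0 := by
    rw [← hcoeff, Finset.mul_sum]
    refine Finset.sum_congr rfl fun x hx ↦ ?_
    have hxN : x ≤ N := Finset.mem_range_succ_iff.mp hx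
    rw [coeff_krawtchoukGen_eq_choose_mul_kraw p hxN hm,
      coeff_krawtchoukGen_eq_choose_mul_kraw p hxN hn]
    ring
  rcases eq_or_ne m n with rfl | hmn
  · rw [if_pos rfl] at hsum
    rw [if_pos rfl, one_mul, eq_div_iff hNn]
    exact mul_left_cancel₀ hNm (by linear_combination hsum)
  · rw [if_neg hmn] at hsum ⊢
    simpa [hNm, hNn] using hsum

theorem krawtchouk_orthogonality (N : ℕ) (hN : 0 < N) (p : ℝ)
    (hp : p ∈ Set.Ioo (0 : ℝ) 1) (n m : ℕ) (hn : n ≤ N) (hm : m ≤ N) :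
    ∑ x ∈ Finset.range (N + 1),
        (N.choose x : ℝ) * p ^ x * (1 - p) ^ (N - x) *
          kraw m (x : ℝ) p N * kraw n (x : ℝ) p N =
      (if m = n then (1 : ℝ) else 0) * ((1 - p) / p) ^ n / (N.choose n : ℝ) :=
  krawtchouk_orthogonality_general N p hp n m hn hm
end
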